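/- Let A = VΛVᴴ be positive semidefinite with ordered eigenvalues λ1 ≥ … ≥ λK > 0, let q ≤ min{M,K}, and define the q×q diagonal matrix Φ by |φ_ii|² = (p0 + Σ_{j=1}^q λ_j^{-1})/q − λ_i^{-1}, assumed nonnegative for all i ≤ q. Then F = Ṽ_q [Φ 0] Ψ (Ψ any M×M unitary, Ṽ_q the first q columns of V) satisfies tr(FᴴF) = p0 and det(I + FᴴAF) = ((p0 + Σ_{j=1}^q λ_j^{-1})/q)^q ∏_{j=1}^q λ_j. -/

import Mathlib

/-!
Write `F = U Φ W` with `U = Ṽ_q` an isometry (`UᴴU = 1`) and `W` the first `q` rows of `Ψ`, a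
co-isometry (`WWᴴ = 1`). Then `tr(FᴴF) = tr(ΦᴴΦ) = Σ |φ_ii|²`, and Sylvester's identity
`det(1 + Wᴴ X W) = det(1 + X W Wᴴ)` reduces `det(1 + FᴴAF)` to the `q × q` diagonal determinant
`∏ (1 + λ_i |φ_ii|²)`, where `UᴴAU = diag(λ_1, …, λ_q)`. With `t = (p0 + Σ λ_j⁻¹)/q` the entries
are `|φ_ii|² = t - λ_i⁻¹`, so the trace is `qt - Σ λ_j⁻¹ = p0` and each factor is `λ_i t`.
-/

open Matrix Finset

namespace Matrix

variable {l m n o α : Type*} [Fintype m]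

theorem conjTranspose_submatrix_mul_mul_submatrix [NonUnitalSemiring α] [Star α]
    (V : Matrix m n α) (X : Matrix m m α) (e : l → n) :
    (V.submatrix id e)ᴴ * X * V.submatrix id e = (Vᴴ * X * V).submatrix e e := by
  rw [conjTranspose_submatrix, ← submatrix_id_id X,
    ← submatrix_mul _ _ _ _ _ Function.bijective_id,
    ← submatrix_mul _ _ _ _ _ Function.bijective_id, submatrix_id_id]

theorem conjTranspose_submatrix_mul_submatrix_of_injective [DecidableEq m] [DecidableEq n]
    [DecidableEq l] [Semiring α] [Star α] {V : Matrix m n α} (hV : Vᴴ * V = 1) {e : l → n}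
    (he : Function.Injective e) :
    (V.submatrix id e)ᴴ * V.submatrix id e = 1 := by
  simpa [hV, submatrix_one e he] using conjTranspose_submatrix_mul_mul_submatrix V 1 e

theorem submatrix_mul_conjTranspose_submatrix_of_injective [DecidableEq m] [DecidableEq n]
    [DecidableEq l] [Semiring α] [StarRing α] {V : Matrix n m α} (hV : V * Vᴴ = 1) {e : l → n}
    (he : Function.Injective e) :
    V.submatrix e id * (V.submatrix e id)ᴴ = 1 := by
  simpa [conjTranspose_submatrix] using
    conjTranspose_submatrix_mul_submatrix_of_injective (V := Vᴴ) (by simpa using hV) he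

theorem conjTranspose_mul_mul_conjTranspose_mul_of_isometry [Fintype n] [Semiring α] [Star α]
    [DecidableEq n] {V : Matrix m n α} (hV : Vᴴ * V = 1) (D : Matrix n n α) :
    Vᴴ * (V * D * Vᴴ) * V = D := by
  simp only [← Matrix.mul_assoc, hV, Matrix.one_mul]
  rw [Matrix.mul_assoc, hV, Matrix.mul_one]

variable [Fintype n] [CommRing α] [StarRing α] [DecidableEq n]

theorem trace_conjTranspose_mul_self_of_isometries [Fintype o] {U : Matrix m n α}
    {W : Matrix n o α} (hU : Uᴴ * U = 1) (hW : W * Wᴴ = 1) (Φ : Matrix n n α) :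
    ((U * Φ * W)ᴴ * (U * Φ * W)).trace = (Φᴴ * Φ).trace := by
  have hF : (U * Φ * W)ᴴ * (U * Φ * W) = Wᴴ * (Φᴴ * Φ) * W := by
    simp only [conjTranspose_mul, Matrix.mul_assoc]
    rw [← Matrix.mul_assoc Uᴴ U, hU, Matrix.one_mul]
  rw [hF, trace_mul_cycle, hW, Matrix.one_mul]

theorem det_one_add_conjTranspose_mul_mul_of_coisometry [Fintype o] [DecidableEq o]
    {W : Matrix n o α} (hW : W * Wᴴ = 1) (U : Matrix m n α) (Φ : Matrix n n α)
    (A : Matrix m m α) :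
    (1 + (U * Φ * W)ᴴ * A * (U * Φ * W)).det = (1 + Φᴴ * (Uᴴ * A * U) * Φ).det := by
  calc (1 + (U * Φ * W)ᴴ * A * (U * Φ * W)).det
      = (1 + Wᴴ * (Φᴴ * (Uᴴ * A * U) * Φ * W)).det := by
        simp only [conjTranspose_mul, Matrix.mul_assoc]
    _ = (1 + Φᴴ * (Uᴴ * A * U) * Φ * (W * Wᴴ)).det := by
        rw [det_one_add_mul_comm, Matrix.mul_assoc _ W]
    _ = (1 + Φᴴ * (Uᴴ * A * U) * Φ).det := by rw [hW, Matrix.mul_one]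

theorem trace_diagonal_conjTranspose_mul_diagonal (φ : n → α) :
    ((diagonal φ)ᴴ * diagonal φ).trace = ∑ i, star (φ i) * φ i := by
  rw [diagonal_conjTranspose, diagonal_mul_diagonal, trace_diagonal]
  rfl

theorem det_one_add_diagonal_conjTranspose_mul_mul_diagonal (φ d : n → α) :
    (1 + (diagonal φ)ᴴ * diagonal d * diagonal φ).det = ∏ i, (1 + star (φ i) * d i * φ i) := by
  rw [diagonal_conjTranspose, diagonal_mul_diagonal, diagonal_mul_diagonal, ← diagonal_one,
    diagonal_add, det_diagonal]
  rfl

end Matrix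

section Padding

variable {α : Type*} [Semiring α] {q M : ℕ} {Φ : Matrix (Fin q) (Fin q) α}
  {Pad : Matrix (Fin q) (Fin M) α}

theorem pad_eq_mul_submatrix_one (hqM : q ≤ M)
    (hPad : ∀ (i : Fin q) (j : Fin M), Pad i j = if h : (j : ℕ) < q then Φ i ⟨j, h⟩ else 0) :
    Pad = Φ * (1 : Matrix (Fin M) (Fin M) α).submatrix (Fin.castLE hqM) id := by
  ext i j
  rw [hPad, mul_apply]
  split_ifs with h
  · rw [Finset.sum_eq_single ⟨j, h⟩]
    · simp [one_apply]
    · intro k _ hk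
      simp [one_apply, Fin.ext_iff, Fin.ext_iff.not.mp hk]
    · simp
  · refine (Finset.sum_eq_zero fun k _ => ?_).symm
    simp [one_apply, Fin.ext_iff]
    omega

theorem pad_mul_eq_mul_submatrix {o : Type*} [Fintype o] (hqM : q ≤ M)
    (hPad : ∀ (i : Fin q) (j : Fin M), Pad i j = if h : (j : ℕ) < q then Φ i ⟨j, h⟩ else 0)
    (Ψ : Matrix (Fin M) o α) :
    Pad * Ψ = Φ * Ψ.submatrix (Fin.castLE hqM) id := by
  rw [pad_eq_mul_submatrix_one hqM hPad, Matrix.mul_assoc, ← submatrix_id_id Ψ,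
    ← submatrix_mul _ _ _ _ _ Function.bijective_id, Matrix.one_mul, submatrix_id_id]

end Padding

theorem sum_waterlevel_sub_inv {q : ℕ} (hq : q ≠ 0) (p0 : ℝ) (μ : ℕ → ℝ) :
    ∑ i ∈ range q, ((p0 + ∑ j ∈ range q, (μ j)⁻¹) / q - (μ i)⁻¹) = p0 := by
  rw [sum_sub_distrib, sum_const, card_range, nsmul_eq_mul]
  field_simp
  ring

theorem prod_one_add_mul_waterlevel_sub_inv {q : ℕ} (t : ℝ) {μ : ℕ → ℝ}
    (hμ : ∀ i < q, μ i ≠ 0) :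
    ∏ i ∈ range q, (1 + μ i * (t - (μ i)⁻¹)) = t ^ q * ∏ i ∈ range q, μ i := by
  rw [← card_range q, ← prod_const, card_range, ← prod_mul_distrib]
  refine prod_congr rfl fun i hi => ?_
  rw [mul_sub, mul_inv_cancel₀ (hμ i (mem_range.mp hi))]
  ring

theorem stmt13_general (K M q : ℕ) (hq : 0 < q) (hqM : q ≤ M) (hqK : q ≤ K)
    (p0 : ℝ)
    (V : Matrix (Fin K) (Fin K) ℂ) (hV : Vᴴ * V = 1)
    (μ : ℕ → ℝ) (hpos : ∀ i < K, 0 < μ i)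
    (A : Matrix (Fin K) (Fin K) ℂ)
    (hA : A = V * Matrix.diagonal (fun i : Fin K => (μ (i : ℕ) : ℂ)) * Vᴴ)
    (Φ : Matrix (Fin q) (Fin q) ℂ)
    (hΦdiag : ∀ i j : Fin q, i ≠ j → Φ i j = 0)
    (hΦ : ∀ i : Fin q, ‖Φ i i‖ ^ 2 =
      (p0 + ∑ j ∈ Finset.range q, (μ j)⁻¹) / q - (μ (i : ℕ))⁻¹)
    (Ψ : Matrix (Fin M) (Fin M) ℂ) (hΨ : Ψᴴ * Ψ = 1)
    (Pad : Matrix (Fin q) (Fin M) ℂ)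
    (hPad : ∀ (i : Fin q) (j : Fin M),
      Pad i j = if h : (j : ℕ) < q then Φ i ⟨(j : ℕ), h⟩ else 0)
    (F : Matrix (Fin K) (Fin M) ℂ)
    (hF : F = V.submatrix id (Fin.castLE hqK) * Pad * Ψ) :
    (Fᴴ * F).trace = (p0 : ℂ) ∧
    (1 + Fᴴ * A * F).det =
      ((((p0 + ∑ j ∈ Finset.range q, (μ j)⁻¹) / q) ^ q *
          ∏ j ∈ Finset.range q, μ j : ℝ) : ℂ) := by
  set t := (p0 + ∑ j ∈ range q, (μ j)⁻¹) / q
  set U := V.submatrix id (Fin.castLE hqK)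
  set W := Ψ.submatrix (Fin.castLE hqM) id
  have hU : Uᴴ * U = 1 :=
    conjTranspose_submatrix_mul_submatrix_of_injective hV (Fin.castLE_injective hqK)
  have hW : W * Wᴴ = 1 := submatrix_mul_conjTranspose_submatrix_of_injective
    (mul_eq_one_comm.mp hΨ) (Fin.castLE_injective hqM)
  have hFUW : F = U * Φ * W := by rw [hF, Matrix.mul_assoc, pad_mul_eq_mul_submatrix hqM hPad,
    ← Matrix.mul_assoc]
  have hAU : Uᴴ * A * U = diagonal (fun i : Fin q => (μ i : ℂ)) := by
    rw [conjTranspose_submatrix_mul_mul_submatrix, hA,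
      conjTranspose_mul_mul_conjTranspose_mul_of_isometry hV,
      submatrix_diagonal _ _ (Fin.castLE_injective hqK)]
    rfl
  have hΦd : Φ = diagonal Φ.diag := ((isDiag_iff_diagonal_diag Φ).mp hΦdiag).symm
  have hnorm (i : Fin q) : star (Φ i i) * Φ i i = ((t - (μ i)⁻¹ : ℝ) : ℂ) := by
    rw [← hΦ i, Complex.star_def, Complex.conj_mul', Complex.ofReal_pow]
  have hfactor (i : Fin q) :
      1 + star (Φ i i) * (μ i : ℂ) * Φ i i = ((1 + μ i * (t - (μ i)⁻¹) : ℝ) : ℂ) := by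
    rw [mul_right_comm, hnorm]
    push_cast
    ring
  constructor
  · rw [hFUW, trace_conjTranspose_mul_self_of_isometries hU hW, hΦd,
      trace_diagonal_conjTranspose_mul_diagonal]
    simp only [Matrix.diag_apply, hnorm]
    rw [← Complex.ofReal_sum, Fin.sum_univ_eq_sum_range (fun i => t - (μ i)⁻¹),
      sum_waterlevel_sub_inv hq.ne']
  · rw [hFUW, det_one_add_conjTranspose_mul_mul_of_coisometry hW, hAU, hΦd,
      det_one_add_diagonal_conjTranspose_mul_mul_diagonal]
    simp only [Matrix.diag_apply, hfactor]
    rw [← Complex.ofReal_prod, Fin.prod_univ_eq_prod_range (fun i => 1 + μ i * (t - (μ i)⁻¹)),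
      prod_one_add_mul_waterlevel_sub_inv t fun i hi => (hpos i (hi.trans_le hqK)).ne']

/-- The waterfilling precoder `F = Ṽ_q [Φ 0] Ψ`, with
`|φ_ii|² = (p0 + Σ_{j=1}^q λ_j⁻¹)/q − λ_i⁻¹`, uses exactly the power `p0` and
achieves `det(I + FᴴAF) = ((p0 + Σ_{j=1}^q λ_j⁻¹)/q)^q ∏_{j=1}^q λ_j`. -/
theorem stmt13 (K M q : ℕ) (hq : 0 < q) (hqM : q ≤ M) (hqK : q ≤ K)
    (p0 : ℝ) (hp0 : 0 < p0)
    (V : Matrix (Fin K) (Fin K) ℂ) (hV : Vᴴ * V = 1)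
    (μ : ℕ → ℝ) (hpos : ∀ i < K, 0 < μ i)
    (hmono : ∀ i j : ℕ, i ≤ j → j < K → μ j ≤ μ i)
    (A : Matrix (Fin K) (Fin K) ℂ)
    (hA : A = V * Matrix.diagonal (fun i : Fin K => (μ (i : ℕ) : ℂ)) * Vᴴ)
    (Φ : Matrix (Fin q) (Fin q) ℂ)
    (hΦdiag : ∀ i j : Fin q, i ≠ j → Φ i j = 0)
    (hΦ : ∀ i : Fin q, ‖Φ i i‖ ^ 2 =
      (p0 + ∑ j ∈ Finset.range q, (μ j)⁻¹) / q - (μ (i : ℕ))⁻¹)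
    (Ψ : Matrix (Fin M) (Fin M) ℂ) (hΨ : Ψᴴ * Ψ = 1)
    (Pad : Matrix (Fin q) (Fin M) ℂ)
    (hPad : ∀ (i : Fin q) (j : Fin M),
      Pad i j = if h : (j : ℕ) < q then Φ i ⟨(j : ℕ), h⟩ else 0)
    (F : Matrix (Fin K) (Fin M) ℂ)
    (hF : F = V.submatrix id (Fin.castLE hqK) * Pad * Ψ) :
    (Fᴴ * F).trace = (p0 : ℂ) ∧
    (1 + Fᴴ * A * F).det =
      ((((p0 + ∑ j ∈ Finset.range q, (μ j)⁻¹) / q) ^ q *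
          ∏ j ∈ Finset.range q, μ j : ℝ) : ℂ) :=
  stmt13_general K M q hq hqM hqK p0 V hV μ hpos A hA Φ hΦdiag hΦ Ψ hΨ Pad hPad F hF
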